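/- Let (X,f) be a topological dynamical system and A a sequence of positive integers whose set of values contains a difference set, i.e., there is an infinite set B ⊆ ℕ with {b − b' : b, b' ∈ B, b > b'} contained in the set of terms of A. If (X,f) is multi-transitive with respect to the sequence A, then (X,f) is strongly scattering, i.e., weakly disjoint from every E-system. -/

import Mathlib

open Function Set Filter Topology MeasureTheory

/-- A topological dynamical system `f : X → X` is (topologically) transitive if for every
two non-empty open subsets `U`, `V` there exists `n ≥ 1` with `f^[n] '' U ∩ V ≠ ∅`. -/
def IsTopTransitive {X : Type*} [TopologicalSpace X] (f : X → X) : Prop :=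
  ∀ U V : Set X, IsOpen U → IsOpen V → U.Nonempty → V.Nonempty →
    ∃ n : ℕ, 1 ≤ n ∧ (f^[n] '' U ∩ V).Nonempty

/-- Multi-transitivity with respect to a vector `a = (a₁, …, a_r)`: the product system
`(X^r, f^{a₁} × ⋯ × f^{a_r})` is transitive. -/
def MultiTransWrt {X : Type*} [TopologicalSpace X] (f : X → X) {r : ℕ} (a : Fin r → ℕ) : Prop :=
  IsTopTransitive (fun x : Fin r → X => fun i => f^[a i] (x i))

/-- `(X, f)` is multi-transitive if it is multi-transitive with respect to `(1, 2, …, n)`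
for every `n ≥ 1`. -/
def MultiTrans {X : Type*} [TopologicalSpace X] (f : X → X) : Prop :=
  ∀ n : ℕ, 1 ≤ n → MultiTransWrt f (fun i : Fin n => (i : ℕ) + 1)

/-- `(X, f)` is strongly multi-transitive if it is multi-transitive with respect to every
vector of positive integers. -/
def StrongMultiTrans {X : Type*} [TopologicalSpace X] (f : X → X) : Prop :=
  ∀ r : ℕ, 1 ≤ r → ∀ a : Fin r → ℕ, (∀ i, 1 ≤ a i) → MultiTransWrt f a

/-- The hitting time set `N(U, V) = {n ≥ 1 : f^[n] '' U ∩ V ≠ ∅}`. -/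
def HittingTimes {X : Type*} [TopologicalSpace X] (f : X → X) (U V : Set X) : Set ℕ :=
  {n : ℕ | 1 ≤ n ∧ (f^[n] '' U ∩ V).Nonempty}

/-! Fix `k > 1 / μ W` elements of `B`. Transitivity of `∏ f^{a_i}` on a finite product of copies
of two open sets `U`, `V` gives one `n` such that every `n a_i` with `i` in a prescribed finite set
is a hitting time of `f` from `U` to `V`; take the indices realising the differences of the chosen
elements of `B`. The `k` sets `g^{-n b} W` cannot be pairwise disjoint, so some `n (b' - b)` is a
return time of `W` under `g`, hence a common hitting time. Composing with a connecting time `m` of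
`g` (with `V = f^{-m} U₂`, non-empty because `f` is surjective) gives transitivity of `f × g`. -/

section Transitivity

variable {X : Type*} [TopologicalSpace X] {f : X → X}

theorem IsTopTransitive.surjective [CompactSpace X] [T2Space X] (hT : IsTopTransitive f)
    (hf : Continuous f) : Surjective f := by
  by_contra hns
  obtain ⟨y, hy⟩ : (range f)ᶜ.Nonempty := by
    rwa [nonempty_compl, Ne, range_eq_univ]
  obtain ⟨n, hn, -, ⟨x, -, rfl⟩, hx⟩ := hT univ (range f)ᶜ isOpen_univ
    (isCompact_range hf).isClosed.isOpen_compl ⟨y, trivial⟩ ⟨y, hy⟩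
  obtain ⟨k, rfl⟩ := Nat.exists_eq_add_of_le' hn
  exact hx ⟨f^[k] x, (iterate_succ_apply' f k x).symm⟩

theorem hittingTimes_mono {U U' V V' : Set X} (hU : U ⊆ U') (hV : V ⊆ V') :
    HittingTimes f U V ⊆ HittingTimes f U' V' :=
  fun _ ⟨hn, hUV⟩ => ⟨hn, hUV.mono (inter_subset_inter (image_mono hU) hV)⟩

theorem add_mem_hittingTimes {U V : Set X} {m t : ℕ} (ht : t ∈ HittingTimes f U (f^[m] ⁻¹' V)) :
    m + t ∈ HittingTimes f U V := by
  obtain ⟨ht, -, ⟨x, hx, rfl⟩, hxV⟩ := ht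
  exact ⟨by omega, f^[m + t] x, ⟨x, hx, rfl⟩, by rwa [iterate_add_apply]⟩

theorem IsTopTransitive.prodMap_of_hittingTimes {Y : Type*} [TopologicalSpace Y] {g : Y → Y}
    (h : ∀ U₁ U₂ : Set X, ∀ W₁ W₂ : Set Y, IsOpen U₁ → IsOpen U₂ → IsOpen W₁ → IsOpen W₂ →
      U₁.Nonempty → U₂.Nonempty → W₁.Nonempty → W₂.Nonempty →
      (HittingTimes f U₁ U₂ ∩ HittingTimes g W₁ W₂).Nonempty) :
    IsTopTransitive (fun p : X × Y => (f p.1, g p.2)) := by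
  intro O₁ O₂ hO₁ hO₂ ⟨p, hp⟩ ⟨q, hq⟩
  obtain ⟨U₁, W₁, hU₁, hW₁, hpU, hpW, hsub₁⟩ := isOpen_prod_iff.mp hO₁ p.1 p.2 hp
  obtain ⟨U₂, W₂, hU₂, hW₂, hqU, hqW, hsub₂⟩ := isOpen_prod_iff.mp hO₂ q.1 q.2 hq
  obtain ⟨n, ⟨hn, -, ⟨x, hx, rfl⟩, hxU⟩, -, -, ⟨y, hy, rfl⟩, hyW⟩ :=
    h U₁ U₂ W₁ W₂ hU₁ hU₂ hW₁ hW₂ ⟨_, hpU⟩ ⟨_, hqU⟩ ⟨_, hpW⟩ ⟨_, hqW⟩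
  refine ⟨n, hn, (f^[n] x, g^[n] y), ⟨(x, y), hsub₁ ⟨hx, hy⟩, ?_⟩, hsub₂ ⟨hxU, hyW⟩⟩
  exact congrFun (Prod.map_iterate f g n) (x, y)

end Transitivity

theorem iterate_pi_iterate {X : Type*} (f : X → X) (a : ℕ → ℕ) (n : ℕ) :
    (fun x : ℕ → X => fun i => f^[a i] (x i))^[n] = fun x i => f^[n * a i] (x i) := by
  funext x i
  rw [show (fun x : ℕ → X => fun i => f^[a i] (x i)) = Pi.map fun i => f^[a i] from rfl,
    Pi.map_iterate, mul_comm, iterate_mul]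
  rfl

section ProductAlongSequence

variable {X : Type*} [TopologicalSpace X] {f : X → X} {a : ℕ → ℕ}

theorem surjective_of_isTopTransitive_pi [CompactSpace X] [T2Space X]
    (hA : IsTopTransitive (fun x : ℕ → X => fun i => f^[a i] (x i))) (hf : Continuous f)
    {i : ℕ} (hi : 1 ≤ a i) : Surjective f := by
  have hF := hA.surjective (continuous_pi fun j => (hf.iterate (a j)).comp (continuous_apply j))
  have hfi : Surjective f^[a i] := fun y =>
    let ⟨z, hz⟩ := hF fun _ => y
    ⟨z i, congrFun hz i⟩
  obtain ⟨k, hk⟩ := Nat.exists_eq_add_of_le' hi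
  rw [hk, iterate_succ'] at hfi
  exact hfi.of_comp

theorem IsTopTransitive.exists_forall_image_iterate_mul_inter_nonempty
    (hA : IsTopTransitive (fun x : ℕ → X => fun i => f^[a i] (x i))) {I : Set ℕ} (hI : I.Finite)
    {U V : Set X} (hU : IsOpen U) (hV : IsOpen V) (hU' : U.Nonempty) (hV' : V.Nonempty) :
    ∃ n, 1 ≤ n ∧ ∀ i ∈ I, (f^[n * a i] '' U ∩ V).Nonempty := by
  obtain ⟨u, hu⟩ := hU'
  obtain ⟨v, hv⟩ := hV'
  obtain ⟨n, hn, -, ⟨w, hw, rfl⟩, hwV⟩ := hA (I.pi fun _ => U) (I.pi fun _ => V)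
    (isOpen_set_pi hI fun _ _ => hU) (isOpen_set_pi hI fun _ _ => hV)
    ⟨fun _ => u, fun _ _ => hu⟩ ⟨fun _ => v, fun _ _ => hv⟩
  refine ⟨n, hn, fun i hi => ⟨_, ⟨w i, hw i hi, ?_⟩, hwV i hi⟩⟩
  rw [iterate_pi_iterate]

end ProductAlongSequence

theorem MeasureTheory.MeasurePreserving.exists_lt_sub_mem_hittingTimes {Y : Type*}
    [TopologicalSpace Y] [MeasurableSpace Y] {μ : Measure Y} {g : Y → Y}
    (hg : MeasurePreserving g μ μ) {W : Set Y} (hW : MeasurableSet W) {F : Finset ℕ}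
    (hF : μ univ < F.card * μ W) :
    ∃ p ∈ F, ∃ q ∈ F, p < q ∧ q - p ∈ HittingTimes g W W := by
  have hmeas : ∀ p ∈ F, NullMeasurableSet (g^[p] ⁻¹' W) μ := fun p _ =>
    ((hg.iterate p).measurable hW).nullMeasurableSet
  have hsum : ∑ p ∈ F, μ (g^[p] ⁻¹' W) = F.card * μ W := by
    simp [(hg.iterate _).measure_preimage hW.nullMeasurableSet]
  have hreturn : ∀ p q, p < q → ∀ y ∈ g^[p] ⁻¹' W ∩ g^[q] ⁻¹' W, q - p ∈ HittingTimes g W W :=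
    fun p q hpq y ⟨hp, hq⟩ => ⟨by omega, _, ⟨g^[p] y, hp, rfl⟩, by
      rwa [← iterate_add_apply, Nat.sub_add_cancel hpq.le]⟩
  obtain ⟨p, hp, q, hq, hpq, y, hy⟩ :=
    exists_nonempty_inter_of_measure_univ_lt_sum_measure μ hmeas (hsum ▸ hF)
  rcases hpq.lt_or_gt with hpq | hqp
  · exact ⟨p, hp, q, hq, hpq, hreturn p q hpq y hy⟩
  · exact ⟨q, hq, p, hp, hqp, hreturn q p hqp y hy.symm⟩

theorem exists_mem_hittingTimes_inter_of_diffSet {X Y : Type*} [TopologicalSpace X]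
    [TopologicalSpace Y] [MeasurableSpace Y] {f : X → X} {a : ℕ → ℕ}
    (hA : IsTopTransitive (fun x : ℕ → X => fun i => f^[a i] (x i))) {B : Set ℕ}
    (hB : B.Infinite) (hBa : ∀ b ∈ B, ∀ b' ∈ B, b' < b → b - b' ∈ Set.range a)
    {μ : Measure Y} [IsFiniteMeasure μ] {g : Y → Y} (hg : MeasurePreserving g μ μ)
    {U V : Set X} (hU : IsOpen U) (hV : IsOpen V) (hU' : U.Nonempty) (hV' : V.Nonempty)
    {W : Set Y} (hW : MeasurableSet W) (hW0 : μ W ≠ 0) :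
    (HittingTimes f U V ∩ HittingTimes g W W).Nonempty := by
  choose! c hc using fun p (hp : p ∈ B) q (hq : q ∈ B) (hpq : p < q) => hBa q hq p hp hpq
  obtain ⟨k, hk⟩ := ENNReal.exists_nat_mul_gt hW0 (measure_ne_top μ univ)
  obtain ⟨F, hFB, rfl⟩ := hB.exists_subset_card_eq k
  obtain ⟨n, hn, hfn⟩ := hA.exists_forall_image_iterate_mul_inter_nonempty
    ((F ×ˢ F).image fun pq => c pq.1 pq.2).finite_toSet hU hV hU' hV'
  obtain ⟨p, hp, q, hq, hpq, hqp, hW⟩ := (hg.iterate n).exists_lt_sub_mem_hittingTimes hW hk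
  have hcpq : a (c p q) = q - p := hc p (hFB hp) q (hFB hq) hpq
  refine ⟨n * (q - p), ⟨Nat.mul_pos hn hqp, ?_⟩, Nat.mul_pos hn hqp, ?_⟩
  · rw [← hcpq]
    exact hfn _ (Finset.mem_image.2 ⟨(p, q), Finset.mem_product.2 ⟨hp, hq⟩, rfl⟩)
  · rwa [iterate_mul]

theorem seqMultiTrans_diffSet_stronglyScattering
    {X : Type*} [MetricSpace X] [CompactSpace X] (f : X → X) (hf : Continuous f)
    (a : ℕ → ℕ) (ha : ∀ i, 1 ≤ a i) (B : Set ℕ) (hB : B.Infinite)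
    (hBa : ∀ b ∈ B, ∀ b' ∈ B, b' < b → b - b' ∈ Set.range a)
    (hA : IsTopTransitive (fun x : ℕ → X => fun i => f^[a i] (x i))) :
    ∀ (Y : Type*) [MetricSpace Y] [CompactSpace Y] [MeasurableSpace Y] [BorelSpace Y]
      (g : Y → Y), Continuous g → IsTopTransitive g →
      (∃ μ : Measure Y, IsProbabilityMeasure μ ∧
        (∀ s : Set Y, MeasurableSet s → μ (g ⁻¹' s) = μ s) ∧
        (∀ W : Set Y, IsOpen W → W.Nonempty → 0 < μ W)) →
      IsTopTransitive (fun p : X × Y => (f p.1, g p.2)) := by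
  intro Y _ _ _ _ g hg hgT ⟨μ, hμ, hμg, hμpos⟩
  have hfs : Surjective f := surjective_of_isTopTransitive_pi hA hf (ha 0)
  have hgμ : MeasurePreserving g μ μ := ⟨hg.measurable, Measure.ext fun s hs => by
    rw [Measure.map_apply hg.measurable hs, hμg s hs]⟩
  refine IsTopTransitive.prodMap_of_hittingTimes
    fun U₁ U₂ W₁ W₂ hU₁ hU₂ hW₁ hW₂ hU₁' hU₂' hW₁' hW₂' => ?_
  obtain ⟨m, -, -, ⟨y, hy₁, rfl⟩, hy₂⟩ := hgT W₁ W₂ hW₁ hW₂ hW₁' hW₂'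
  have hW : IsOpen (W₁ ∩ g^[m] ⁻¹' W₂) := hW₁.inter (hW₂.preimage (hg.iterate m))
  obtain ⟨t, hft, hgt⟩ := exists_mem_hittingTimes_inter_of_diffSet hA hB hBa hgμ hU₁
    (hU₂.preimage (hf.iterate m)) hU₁' ((hfs.iterate m).nonempty_preimage.2 hU₂')
    hW.measurableSet (hμpos _ hW ⟨y, hy₁, hy₂⟩).ne'
  exact ⟨m + t, add_mem_hittingTimes hft,
    add_mem_hittingTimes (hittingTimes_mono inter_subset_left inter_subset_right hgt)⟩
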